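/- arXiv:2108.00979 — 7 statements merged into one kernel-verified Lean document; each statement's English description precedes it below -/
import Mathlib

section
/- Let n ≥ 1 and let α₁ ≥ α₂ ≥ ⋯ ≥ αₙ ≥ 0 be real numbers, and set ᾱ = α₁ + ⋯ + αₙ. Define z_I for nonempty I ⊆ {1,…,n+1} by z_I = α_{n} + α_{n−1} + ⋯ + α_{n+2−|I|} (i.e., z_I = Σ_{i=1}^{|I|−1} α_{n+1−i}) if n+1 ∈ I, and z_I = 0 otherwise. Let Γ = {x ∈ ℝ^{n+1} : Σ_{i=1}^{n+1} x_i = ᾱ, and Σ_{i∈I} x_i ≤ ᾱ − z_{I^c} for every nonempty I ⊆ {1,…,n+1}}, where I^c = {1,…,n+1}∖I. Then the image of Γ under the orthogonal projection ℝ^{n+1} → ℝⁿ omitting the last coordinate equals the set {x ∈ ℝⁿ : x_i ≥ 0 for all i, and Σ_{i∈I} x_i ≤ α₁ + ⋯ + α_k for every subset I ⊆ {1,…,n} of cardinality k, for every k ≥ 1}. -/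
/-!
Write a point of `ℝ^{n+1}` as `(y, t)`. On the hyperplane `Σ x = ᾱ` the last coordinate is
determined by `y`, so every `y` has exactly one lift and it suffices to rewrite the inequalities
of `Γ` in terms of `y`. If `n+1 ∈ I` then `z_{Iᶜ} = 0` and the inequality says that
the coordinates of `y` outside `I` have nonnegative sum; ranging over all such `I`, this is
`y ≥ 0`. If `n+1 ∉ I` then `Iᶜ` contains `n+1` and has `n + 1 - |I|` elements, so `z_{Iᶜ}` is the
sum of the last `n - |I|` of the `α`'s and `ᾱ - z_{Iᶜ} = α₁ + ⋯ + α_{|I|}`: this is exactly the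
inequality of `Λ` for `I`.
-/

open Finset

/-- The value `z_I` from the specialization of Postnikov's construction:
`z_I = α_n + α_{n-1} + ⋯ + α_{n+2-|I|}` (1-indexed) if `n+1 ∈ I`, and `0` otherwise.
Here `α : Fin n → ℝ` is 0-indexed, so `α_k` (1-indexed) is `α ⟨k-1⟩`. -/
def zval {n : ℕ} (α : Fin n → ℝ) (I : Finset (Fin (n + 1))) : ℝ :=
  if Fin.last n ∈ I then
    ∑ j ∈ Finset.univ.filter (fun j : Fin n => n + 1 - I.card ≤ (j : ℕ)), α j
  else 0

theorem Finset.forall_mem_sum_le_sum_iff {ι M : Type*} [Fintype ι] [DecidableEq ι]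
    [AddCommMonoid M] [PartialOrder M] [IsOrderedCancelAddMonoid M] (x : ι → M) (a : ι) :
    (∀ I : Finset ι, a ∈ I → ∑ i ∈ I, x i ≤ ∑ i, x i) ↔ ∀ i ≠ a, 0 ≤ x i := by
  constructor
  · intro h i hi
    have hle := h {i}ᶜ (by simpa using hi.symm)
    rwa [← sum_compl_add_sum {i}, sum_singleton, le_add_iff_nonneg_right] at hle
  · intro h I ha
    rw [← sum_compl_add_sum I]
    refine le_add_of_nonneg_left (sum_nonneg fun i hi => h i ?_)
    rintro rfl
    exact mem_compl.1 hi ha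

theorem Fin.forall_finset_last_notMem_iff {n : ℕ} {P : Finset (Fin (n + 1)) → Prop} :
    (∀ I, Fin.last n ∉ I → P I) ↔ ∀ I : Finset (Fin n), P (I.map Fin.castSuccEmb) := by
  constructor
  · intro h I
    exact h _ (by simp [Fin.castSucc_ne_last])
  · intro h I hI
    have hsub : I ⊆ univ.map Fin.castSuccEmb := fun i hi =>
      mem_map.2 ⟨i.castPred (ne_of_mem_of_not_mem hi hI), mem_univ _, Fin.castSucc_castPred _ _⟩
    obtain ⟨J, -, rfl⟩ := subset_map_iff.1 hsub
    exact h J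

section zval

variable {n : ℕ} (α : Fin n → ℝ)

theorem zval_compl_of_last_mem {I : Finset (Fin (n + 1))} (h : Fin.last n ∈ I) :
    zval α Iᶜ = 0 := by
  simp [zval, h]

theorem sum_sub_zval_compl_map_castSuccEmb (I : Finset (Fin n)) :
    ∑ j, α j - zval α (I.map Fin.castSuccEmb)ᶜ =
      ∑ j ∈ univ.filter (fun j : Fin n => (j : ℕ) < #I), α j := by
  have hI : #I ≤ n + 1 := (card_le_card (subset_univ I)).trans (by simp)
  rw [zval, if_pos (by simp [Fin.castSucc_ne_last]), card_compl, card_map, Fintype.card_fin,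
    Nat.sub_sub_self hI, sub_eq_iff_eq_add,
    ← sum_filter_add_sum_filter_not univ (fun j : Fin n => (j : ℕ) < #I)]
  simp only [not_lt]

theorem forall_sum_le_sum_sub_zval_compl_iff (x : Fin (n + 1) → ℝ) (hsum : ∑ i, x i = ∑ i, α i) :
    (∀ I : Finset (Fin (n + 1)), I.Nonempty → ∑ i ∈ I, x i ≤ ∑ i, α i - zval α Iᶜ) ↔
      (∀ i : Fin n, 0 ≤ x i.castSucc) ∧
        ∀ I : Finset (Fin n), I.Nonempty →
          ∑ i ∈ I, x i.castSucc ≤ ∑ j ∈ univ.filter (fun j : Fin n => (j : ℕ) < #I), α j := by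
  have hsplit : ∀ P : Finset (Fin (n + 1)) → Prop,
      (∀ I, P I) ↔ (∀ I, Fin.last n ∈ I → P I) ∧ ∀ I, Fin.last n ∉ I → P I := fun P =>
    ⟨fun h => ⟨fun I _ => h I, fun I _ => h I⟩,
      fun h I => by_cases (h.1 I) (h.2 I)⟩
  rw [hsplit, Fin.forall_finset_last_notMem_iff]
  refine and_congr ?_ ?_
  · calc (∀ I : Finset (Fin (n + 1)), Fin.last n ∈ I → I.Nonempty →
            ∑ i ∈ I, x i ≤ ∑ i, α i - zval α Iᶜ)
          ↔ ∀ I : Finset (Fin (n + 1)), Fin.last n ∈ I → ∑ i ∈ I, x i ≤ ∑ i, x i :=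
            forall₂_congr fun I h => by
              rw [zval_compl_of_last_mem α h, sub_zero, hsum]
              exact ⟨fun hle => hle ⟨_, h⟩, fun hle _ => hle⟩
        _ ↔ ∀ i ≠ Fin.last n, 0 ≤ x i := forall_mem_sum_le_sum_iff x _
        _ ↔ ∀ i : Fin n, 0 ≤ x i.castSucc := by simp [Fin.forall_fin_succ', Fin.castSucc_ne_last]
  · simp only [map_nonempty, sum_map, Fin.coe_castSuccEmb, sum_sub_zval_compl_map_castSuccEmb]

end zval

theorem sim_body_projection_general (n : ℕ) (α : Fin n → ℝ) :
    (fun x : Fin (n + 1) → ℝ => x ∘ Fin.castSucc) ''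
        {x : Fin (n + 1) → ℝ | (∑ i, x i) = (∑ i, α i) ∧
          ∀ I : Finset (Fin (n + 1)), I.Nonempty →
            ∑ i ∈ I, x i ≤ (∑ i, α i) - zval α Iᶜ} =
      {x : Fin n → ℝ | (∀ i, 0 ≤ x i) ∧
        ∀ I : Finset (Fin n), I.Nonempty →
          ∑ i ∈ I, x i ≤ ∑ j ∈ Finset.univ.filter (fun j : Fin n => (j : ℕ) < I.card), α j} := by
  ext y
  constructor
  · rintro ⟨x, ⟨hsum, hΓ⟩, rfl⟩
    exact (forall_sum_le_sum_sub_zval_compl_iff α x hsum).1 hΓ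
  · intro hy
    set x : Fin (n + 1) → ℝ := Fin.snoc y (∑ i, α i - ∑ i, y i)
    have hsum : ∑ i, x i = ∑ i, α i := by simp [x, Fin.sum_univ_castSucc]
    exact ⟨x, ⟨hsum, (forall_sum_le_sum_sub_zval_compl_iff α x hsum).2 (by simpa [x] using hy)⟩,
      Fin.init_snoc _ _⟩

/-- the orthogonal projection of the polyhedron `Γ` (defined by the equality
`Σ x_i = ᾱ` and the inequalities `Σ_{i∈I} x_i ≤ ᾱ − z_{I^c}`) omitting the last coordinate
equals the SIM-body `Λ(α₁,…,αₙ)`. -/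
theorem sim_body_projection (n : ℕ) (hn : 1 ≤ n) (α : Fin n → ℝ)
    (hdec : ∀ i j : Fin n, i ≤ j → α j ≤ α i) (hnonneg : ∀ i, 0 ≤ α i) :
    (fun x : Fin (n + 1) → ℝ => x ∘ Fin.castSucc) ''
        {x : Fin (n + 1) → ℝ | (∑ i, x i) = (∑ i, α i) ∧
          ∀ I : Finset (Fin (n + 1)), I.Nonempty →
            ∑ i ∈ I, x i ≤ (∑ i, α i) - zval α Iᶜ} =
      {x : Fin n → ℝ | (∀ i, 0 ≤ x i) ∧
        ∀ I : Finset (Fin n), I.Nonempty →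
          ∑ i ∈ I, x i ≤ ∑ j ∈ Finset.univ.filter (fun j : Fin n => (j : ℕ) < I.card), α j} :=
  sim_body_projection_general n α
end

section
/- Let n ≥ 1 and let α₁ ≥ α₂ ≥ ⋯ ≥ αₙ ≥ 0 be real numbers. Then the SIM-body Λ(α₁,…,αₙ) equals the convex hull of the set of all points obtained by permuting the coordinates of one of the vectors (α₁,…,α_k,0,…,0) ∈ ℝⁿ for k = 0,1,…,n. Moreover, if α₁ > α₂ > ⋯ > αₙ > 0, then these points are pairwise distinct and each of them is an extreme point (vertex) of Λ(α₁,…,αₙ). -/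
open Finset

/-- The SIM-body `Λ(α₁,…,αₙ)` for parameters `α : Fin n → ℝ` (0-indexed). -/
def SIM {n : ℕ} (α : Fin n → ℝ) : Set (Fin n → ℝ) :=
  {x | (∀ i, 0 ≤ x i) ∧ ∀ I : Finset (Fin n), I.Nonempty →
    ∑ i ∈ I, x i ≤ ∑ j ∈ Finset.univ.filter (fun j : Fin n => (j : ℕ) < I.card), α j}

/-- The vector `(α₁, …, α_k, 0, …, 0)`. -/
def prefixVec {n : ℕ} (α : Fin n → ℝ) (k : ℕ) : Fin n → ℝ :=
  fun i => if (i : ℕ) < k then α i else 0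

/-!
Permuting coordinates preserves `SIM α`, and for antitone nonnegative `α` the antitone vector
`prefixVec α k` satisfies every constraint, since any `m` of its entries sum to at most its first
`m`, hence to at most `α₁ + ⋯ + α_m`; so `SIM α` contains the convex hull of the permuted prefix
vectors. Conversely,
by separation it suffices to bound every linear functional `x ↦ ∑ cᵢ xᵢ` on `SIM α` by its
maximum over these vectors. After permuting, `c` is antitone, and summation by parts against the
prefix-sum constraints gives `∑ cᵢ xᵢ ≤ ∑ max cᵢ 0 · αᵢ = ∑ cᵢ (prefixVec α k)ᵢ`, where `k` is the
number of positive `cᵢ`.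

If `prefixVec α k` lies inside a segment of `SIM α`, both endpoints make the same constraints
tight: the first `m` coordinates sum to `α₁ + ⋯ + α_m` for `m ≤ k`, and the remaining
coordinates vanish. These determine the endpoints. The permuted prefix vectors for different `k`
are distinct because their coordinate sums `α₁ + ⋯ + α_k` are.
-/

section

variable {n : ℕ}

def prefixSum (x : Fin n → ℝ) (m : ℕ) : ℝ :=
  ∑ j ∈ univ.filter (fun j : Fin n => (j : ℕ) < m), x j

@[simp]
lemma prefixSum_zero (x : Fin n → ℝ) : prefixSum x 0 = 0 := by
  simp [prefixSum]

lemma prefixSum_succ (x : Fin n → ℝ) {m : ℕ} (hm : m < n) :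
    prefixSum x (m + 1) = prefixSum x m + x ⟨m, hm⟩ := by
  have : univ.filter (fun j : Fin n => (j : ℕ) < m + 1) =
      insert ⟨m, hm⟩ (univ.filter (fun j : Fin n => (j : ℕ) < m)) := by
    ext j
    simp only [mem_filter, mem_univ, true_and, mem_insert, Fin.ext_iff]
    omega
  rw [prefixSum, prefixSum, this, sum_insert (by simp), add_comm]

lemma prefixSum_univ (x : Fin n → ℝ) : prefixSum x n = ∑ i, x i := by
  simp [prefixSum]

lemma sum_le_prefixSum_card {α : Fin n → ℝ} (hα : Antitone α) (I : Finset (Fin n)) :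
    ∑ i ∈ I, α i ≤ prefixSum α #I := by
  induction I using Finset.induction_on_max with
  | empty => simp
  | insert a s has ih =>
    have hs : #s ≤ a := by
      simpa using card_le_card (fun x hx => mem_Iio.2 (has x hx) : s ⊆ Iio a)
    rw [sum_insert (fun h => lt_irrefl a (has a h)), card_insert_of_notMem
      (fun h => lt_irrefl a (has a h)), prefixSum_succ α (hs.trans_lt a.isLt)]
    linarith [hα (show (⟨#s, hs.trans_lt a.isLt⟩ : Fin n) ≤ a from hs)]

lemma prefixSum_le_of_mem_SIM {α x : Fin n → ℝ} (hx : x ∈ SIM α) {m : ℕ} (hm : m ≤ n) :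
    prefixSum x m ≤ prefixSum α m := by
  rcases (univ.filter (fun j : Fin n => (j : ℕ) < m)).eq_empty_or_nonempty with h | h
  · simp [prefixSum, h]
  · simpa [prefixSum, Fin.card_filter_val_lt, hm] using hx.2 _ h

lemma convex_SIM (α : Fin n → ℝ) : Convex ℝ (SIM α) := by
  intro x hx y hy a b ha hb hab
  refine ⟨fun i => ?_, fun I hI => ?_⟩
  · simp only [Pi.add_apply, Pi.smul_apply, smul_eq_mul]
    nlinarith [hx.1 i, hy.1 i]
  · simp only [Pi.add_apply, Pi.smul_apply, smul_eq_mul, sum_add_distrib, ← mul_sum]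
    calc _ ≤ a * prefixSum α #I + b * prefixSum α #I :=
          add_le_add (mul_le_mul_of_nonneg_left (hx.2 I hI) ha)
            (mul_le_mul_of_nonneg_left (hy.2 I hI) hb)
      _ = prefixSum α #I := by rw [← add_mul, hab, one_mul]

lemma comp_perm_mem_SIM {α x : Fin n → ℝ} (hx : x ∈ SIM α) (σ : Equiv.Perm (Fin n)) :
    x ∘ σ ∈ SIM α := by
  refine ⟨fun i => hx.1 (σ i), fun I hI => ?_⟩
  have hcard : #(I.map σ.toEmbedding) = #I := card_map _
  simpa [sum_map, hcard] using hx.2 (I.map σ.toEmbedding) hI.map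

lemma antitone_prefixVec {α : Fin n → ℝ} (hα : Antitone α) (hα₀ : ∀ i, 0 ≤ α i) (k : ℕ) :
    Antitone (prefixVec α k) := by
  intro i j hij
  unfold prefixVec
  split_ifs with hj hi hi
  · exact hα hij
  · exact absurd ((show (i : ℕ) ≤ j from hij).trans_lt hj) hi
  · exact hα₀ i
  · exact le_rfl

lemma prefixVec_le {α : Fin n → ℝ} (hα₀ : ∀ i, 0 ≤ α i) (k : ℕ) (i : Fin n) :
    prefixVec α k i ≤ α i := by
  unfold prefixVec
  split_ifs
  exacts [le_rfl, hα₀ i]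

lemma prefixVec_mem_SIM {α : Fin n → ℝ} (hα : Antitone α) (hα₀ : ∀ i, 0 ≤ α i) (k : ℕ) :
    prefixVec α k ∈ SIM α := by
  refine ⟨fun i => ?_, fun I _ => ?_⟩
  · unfold prefixVec; split_ifs <;> simp [hα₀ i]
  · calc ∑ i ∈ I, prefixVec α k i ≤ prefixSum (prefixVec α k) #I :=
          sum_le_prefixSum_card (antitone_prefixVec hα hα₀ k) I
      _ ≤ prefixSum α #I := sum_le_sum fun i _ => prefixVec_le hα₀ k i

def simVertices (α : Fin n → ℝ) : Set (Fin n → ℝ) :=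
  {x | ∃ k ≤ n, ∃ σ : Equiv.Perm (Fin n), x = prefixVec α k ∘ σ}

lemma simVertices_subset_SIM {α : Fin n → ℝ} (hα : Antitone α) (hα₀ : ∀ i, 0 ≤ α i) :
    simVertices α ⊆ SIM α := by
  rintro _ ⟨k, -, σ, rfl⟩
  exact comp_perm_mem_SIM (prefixVec_mem_SIM hα hα₀ k) σ

lemma simVertices_finite (α : Fin n → ℝ) : (simVertices α).Finite := by
  refine (Set.finite_range fun p : Fin (n + 1) × Equiv.Perm (Fin n) =>
    prefixVec α p.1 ∘ p.2).subset ?_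
  rintro _ ⟨k, hk, σ, rfl⟩
  exact ⟨(⟨k, Nat.lt_succ_of_le hk⟩, σ), rfl⟩

lemma sum_mul_nonpos_of_prefixSum_nonpos {w d : Fin n → ℝ} (hw : Antitone w)
    (hw₀ : ∀ i, 0 ≤ w i) (hd : ∀ m ≤ n, prefixSum d m ≤ 0) : ∑ i, w i * d i ≤ 0 := by
  have hpartial : ∀ m : ℕ, ∀ j : Fin n, m ≤ (j : ℕ) + 1 →
      prefixSum (fun i => w i * d i) m ≤ w j * prefixSum d m := by
    intro m
    induction m with
    | zero => simp
    | succ m ih =>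
      intro j hj
      have hm : m < n := by omega
      rw [prefixSum_succ _ hm, prefixSum_succ _ hm]
      have h₁ := ih ⟨m, hm⟩ (by simp)
      have h₂ : w j ≤ w ⟨m, hm⟩ :=
        hw (show (⟨m, hm⟩ : Fin n) ≤ j from Nat.le_of_succ_le_succ hj)
      nlinarith [hd (m + 1) hm, prefixSum_succ d hm]
  rcases n with _ | n
  · simp
  · rw [← prefixSum_univ]
    nlinarith [hpartial (n + 1) (Fin.last n) le_rfl, hw₀ (Fin.last n), hd (n + 1) le_rfl]

lemma sum_mul_le_sum_mul_prefixVec {α x c : Fin n → ℝ} (hc : Antitone c) (hx : x ∈ SIM α) :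
    ∑ i, c i * x i ≤ ∑ i, c i * prefixVec α #{i | 0 < c i} i := by
  have hpos : ∀ j : Fin n, (j : ℕ) < #{i | 0 < c i} ↔ 0 < c j := fun j =>
    Fin.lt_card_filter_univ_iff_apply_of_imp _ fun _ _ hji hi => hi.trans_le (hc hji)
  calc ∑ i, c i * x i ≤ ∑ i, max (c i) 0 * x i :=
        sum_le_sum fun i _ => mul_le_mul_of_nonneg_right (le_max_left _ _) (hx.1 i)
    _ ≤ ∑ i, max (c i) 0 * α i := by
        have := sum_mul_nonpos_of_prefixSum_nonpos (d := x - α)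
          (fun _ _ h => max_le_max (hc h) le_rfl) (fun _ => le_max_right _ _)
          fun m hm => by
            simpa [prefixSum, sum_sub_distrib] using prefixSum_le_of_mem_SIM hx hm
        simpa [mul_sub, sum_sub_distrib] using this
    _ = ∑ i, c i * prefixVec α #{i | 0 < c i} i := by
        refine sum_congr rfl fun i _ => ?_
        by_cases h : 0 < c i
        · simp [prefixVec, hpos, h, h.le]
        · simp [prefixVec, hpos, h, not_lt.1 h]

lemma exists_mem_simVertices_sum_mul_le {α x : Fin n → ℝ} (hx : x ∈ SIM α) (c : Fin n → ℝ) :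
    ∃ v ∈ simVertices α, ∑ i, c i * x i ≤ ∑ i, c i * v i := by
  set σ := Tuple.sort (OrderDual.toDual ∘ c)
  have hσ : Antitone (c ∘ σ) := monotone_toDual_comp_iff.1 (Tuple.monotone_sort _)
  set k := #{i | 0 < (c ∘ σ) i}
  have hk : k ≤ n := (card_le_univ _).trans_eq (Fintype.card_fin n)
  refine ⟨prefixVec α k ∘ σ.symm, ⟨k, hk, σ.symm, rfl⟩, ?_⟩
  calc ∑ i, c i * x i = ∑ i, (c ∘ σ) i * (x ∘ σ) i := (Equiv.sum_comp σ _).symm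
    _ ≤ ∑ i, (c ∘ σ) i * prefixVec α k i :=
        sum_mul_le_sum_mul_prefixVec hσ (comp_perm_mem_SIM hx σ)
    _ = ∑ i, c i * (prefixVec α k ∘ σ.symm) i := by
        rw [← Equiv.sum_comp σ (fun i => c i * (prefixVec α k ∘ σ.symm) i)]
        simp

theorem SIM_eq_convexHull_simVertices {α : Fin n → ℝ} (hα : Antitone α) (hα₀ : ∀ i, 0 ≤ α i) :
    SIM α = convexHull ℝ (simVertices α) := by
  refine subset_antisymm (fun x hx => ?_)
    (convexHull_min (simVertices_subset_SIM hα hα₀) (convex_SIM α))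
  by_contra hxV
  obtain ⟨f, u, hfV, hfx⟩ := geometric_hahn_banach_closed_point
    (convex_convexHull ℝ (simVertices α)) ((simVertices_finite α).isClosed_convexHull ℝ) hxV
  set c : Fin n → ℝ := fun i => f fun j => if i = j then 1 else 0
  have hf : ∀ y, f y = ∑ i, c i * y i := fun y => by
    simpa [mul_comm] using f.toLinearMap.pi_apply_eq_sum_univ y
  obtain ⟨v, hv, hle⟩ := exists_mem_simVertices_sum_mul_le hx c
  linarith [hfV v (subset_convexHull ℝ _ hv), hf x, hf v]

lemma prefixSum_prefixVec (α : Fin n → ℝ) {k m : ℕ} (hm : m ≤ k) :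
    prefixSum (prefixVec α k) m = prefixSum α m :=
  sum_congr rfl fun _ hj => if_pos (lt_of_lt_of_le (mem_filter.1 hj).2 hm)

lemma eq_prefixVec_of_prefixSum_eq {α y : Fin n → ℝ} {k : ℕ}
    (hsum : ∀ m ≤ k, prefixSum y m = prefixSum α m) (hzero : ∀ i : Fin n, k ≤ i → y i = 0) :
    y = prefixVec α k := by
  funext i
  unfold prefixVec
  split_ifs with hi
  · have hy := prefixSum_succ y i.isLt
    rw [hsum _ hi, hsum _ hi.le, prefixSum_succ α i.isLt] at hy
    simpa using hy.symm
  · exact hzero i (not_lt.1 hi)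

lemma prefixVec_mem_extremePoints {α : Fin n → ℝ} (hα : Antitone α) (hα₀ : ∀ i, 0 ≤ α i)
    {k : ℕ} (hk : k ≤ n) : prefixVec α k ∈ Set.extremePoints ℝ (SIM α) := by
  refine mem_extremePoints_iff_left.2 ⟨prefixVec_mem_SIM hα hα₀ k, fun y hy z hz hv => ?_⟩
  obtain ⟨a, b, ha, hb, hab, hv⟩ := hv
  refine eq_prefixVec_of_prefixSum_eq (fun m hm => ?_) (fun i hi => ?_)
  · have hcomb : a * prefixSum y m + b * prefixSum z m = prefixSum α m := by
      rw [← prefixSum_prefixVec α hm, ← hv]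
      simp [prefixSum, sum_add_distrib, mul_sum]
    have hsplit : prefixSum α m = a * prefixSum α m + b * prefixSum α m := by
      rw [← add_mul, hab, one_mul]
    nlinarith [prefixSum_le_of_mem_SIM hy (hm.trans hk), prefixSum_le_of_mem_SIM hz (hm.trans hk)]
  · have hcomb : a * y i + b * z i = 0 := by
      simpa [prefixVec, not_lt.2 hi] using congrFun hv i
    nlinarith [hy.1 i, hz.1 i]

lemma comp_perm_mem_extremePoints_SIM {α x : Fin n → ℝ} (hx : x ∈ Set.extremePoints ℝ (SIM α))
    (σ : Equiv.Perm (Fin n)) : x ∘ σ ∈ Set.extremePoints ℝ (SIM α) := by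
  have hSIM : LinearEquiv.funCongrLeft ℝ ℝ σ '' SIM α = SIM α := by
    refine subset_antisymm (Set.image_subset_iff.2 fun y hy => comp_perm_mem_SIM hy σ)
      fun y hy => ⟨y ∘ σ.symm, comp_perm_mem_SIM hy σ.symm, ?_⟩
    ext i
    simp [LinearEquiv.funCongrLeft_apply]
  rw [← hSIM, ← image_extremePoints]
  exact ⟨x, hx, rfl⟩

lemma sum_prefixVec_comp_perm (α : Fin n → ℝ) (k : ℕ) (σ : Equiv.Perm (Fin n)) :
    ∑ i, (prefixVec α k ∘ σ) i = prefixSum α k := by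
  rw [Function.comp_def, Equiv.sum_comp σ (prefixVec α k), prefixSum, sum_filter]
  rfl

lemma prefixSum_strictMonoOn {α : Fin n → ℝ} (hα : ∀ i, 0 < α i) :
    StrictMonoOn (prefixSum α) (Set.Iic n) :=
  strictMonoOn_Iic_of_lt_succ fun m hm => by
    rw [Order.succ_eq_add_one, prefixSum_succ α hm]
    linarith [hα ⟨m, hm⟩]

end

theorem sim_body_vertices_general (n : ℕ) (α : Fin n → ℝ)
    (hdec : ∀ i j : Fin n, i ≤ j → α j ≤ α i) (hnonneg : ∀ i, 0 ≤ α i) :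
    SIM α = convexHull ℝ
        {x : Fin n → ℝ | ∃ k ≤ n, ∃ σ : Equiv.Perm (Fin n), x = prefixVec α k ∘ σ} ∧
      ((∀ i j : Fin n, i < j → α j < α i) → (∀ i, 0 < α i) →
        (∀ k l : ℕ, k ≤ n → l ≤ n → ∀ σ τ : Equiv.Perm (Fin n),
            prefixVec α k ∘ σ = prefixVec α l ∘ τ → k = l) ∧
        (∀ k ≤ n, ∀ σ : Equiv.Perm (Fin n),
            prefixVec α k ∘ σ ∈ Set.extremePoints ℝ (SIM α))) := by
  refine ⟨SIM_eq_convexHull_simVertices hdec hnonneg, fun _ hpos => ⟨?_, ?_⟩⟩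
  · intro k l hk hl σ τ h
    refine (prefixSum_strictMonoOn hpos).injOn hk hl ?_
    rw [← sum_prefixVec_comp_perm α k σ, ← sum_prefixVec_comp_perm α l τ, h]
  · intro k hk σ
    exact comp_perm_mem_extremePoints_SIM (prefixVec_mem_extremePoints hdec hnonneg hk) σ

/-- the SIM-body is the convex hull of all coordinate permutations of the vectors
`(α₁,…,α_k,0,…,0)` for `k = 0,…,n`; moreover, for strictly decreasing positive parameters these
points are pairwise distinct (in particular, points coming from different `k` are distinct)
and each of them is an extreme point of the SIM-body. -/
theorem sim_body_vertices (n : ℕ) (hn : 1 ≤ n) (α : Fin n → ℝ)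
    (hdec : ∀ i j : Fin n, i ≤ j → α j ≤ α i) (hnonneg : ∀ i, 0 ≤ α i) :
    SIM α = convexHull ℝ
        {x : Fin n → ℝ | ∃ k ≤ n, ∃ σ : Equiv.Perm (Fin n), x = prefixVec α k ∘ σ} ∧
      ((∀ i j : Fin n, i < j → α j < α i) → (∀ i, 0 < α i) →
        (∀ k l : ℕ, k ≤ n → l ≤ n → ∀ σ τ : Equiv.Perm (Fin n),
            prefixVec α k ∘ σ = prefixVec α l ∘ τ → k = l) ∧
        (∀ k ≤ n, ∀ σ : Equiv.Perm (Fin n),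
            prefixVec α k ∘ σ ∈ Set.extremePoints ℝ (SIM α))) :=
  sim_body_vertices_general n α hdec hnonneg
end

section
/- Let α₁ ≥ ⋯ ≥ αₙ ≥ 0 be real numbers. Then the SIM-body Λ(α₁,…,αₙ) is a bounded (hence compact) subset of ℝⁿ, and every extreme point of Λ(α₁,…,αₙ) has all coordinates in ℤ if and only if all the parameters α₁,…,αₙ are integers. -/
open Finset

/-!
`Λ(α)` is the polymatroid of the set function `I ↦ α₁ + ⋯ + α_{|I|}`, which is submodular
because partial sums of a nonincreasing nonnegative sequence are concave.

The point `α` itself is a vertex: it is the only point of `Λ(α)` at which every prefix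
constraint `x₁ + ⋯ + x_k ≤ α₁ + ⋯ + α_k` is tight. Hence integral vertices force integral `α`.

Conversely (Edmonds), let `x` be a vertex of the polymatroid of an integer-valued submodular
`f`. Tight sets are closed under intersection, so an inclusion-minimal tight set `I` containing
a non-integral coordinate `j` contains a second one `k` (the sum over `I` is an integer), and no
tight set separates `j` from `k`. Then `x ± ε (e_j - e_k)` stays in the polytope for small `ε`,
contradicting extremality.
-/

open Filter Topology

theorem eq_zero_of_mem_extremePoints_of_eventually_add_smul_mem {E : Type*} [AddCommGroup E]
    [Module ℝ E] {A : Set E} {x d : E} (hx : x ∈ A.extremePoints ℝ)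
    (h : ∀ᶠ t in 𝓝 (0 : ℝ), x + t • d ∈ A) : d = 0 := by
  have hneg : ∀ᶠ t in 𝓝 (0 : ℝ), x + (-t) • d ∈ A :=
    (continuous_neg.tendsto' 0 0 neg_zero).eventually h
  obtain ⟨t, ht, hplus, hminus⟩ :=
    (eventually_mem_nhdsWithin.and (nhdsWithin_le_nhds (h.and hneg))).exists (f := 𝓝[>] (0 : ℝ))
  have hmid : x ∈ openSegment ℝ (x + t • d) (x + (-t) • d) :=
    ⟨1 / 2, 1 / 2, by norm_num, by norm_num, by norm_num, by module⟩
  have := hx.2 hplus hminus hmid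
  exact (smul_eq_zero.1 (add_eq_left.1 this)).resolve_left (ne_of_gt ht)

theorem exists_int_eq_sum {ι : Type*} {s : Finset ι} {g : ι → ℝ}
    (h : ∀ i ∈ s, ∃ m : ℤ, g i = m) : ∃ m : ℤ, ∑ i ∈ s, g i = m := by
  choose! m hm using h
  exact ⟨∑ i ∈ s, m i, by push_cast; exact sum_congr rfl hm⟩

def polymatroid {ι : Type*} (f : Finset ι → ℝ) : Set (ι → ℝ) :=
  {x | (∀ i, 0 ≤ x i) ∧ ∀ I : Finset ι, I.Nonempty → ∑ i ∈ I, x i ≤ f I}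

namespace polymatroid

variable {ι : Type*} {f : Finset ι → ℝ} {x : ι → ℝ}

theorem subset_Icc : polymatroid f ⊆ Set.Icc 0 fun i => f {i} := fun x hx =>
  ⟨hx.1, fun i => by simpa using hx.2 {i} (singleton_nonempty i)⟩

theorem isClosed : IsClosed (polymatroid f) := by
  simp only [polymatroid, Set.ofPred_and, Set.ofPred_forall]
  exact (isClosed_iInter fun i => isClosed_le continuous_const (continuous_apply i)).inter
    (isClosed_iInter fun I => isClosed_iInter fun _ =>
      isClosed_le (continuous_finsetSum I fun i _ => continuous_apply i) continuous_const)

theorem isCompact : IsCompact (polymatroid f) :=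
  isCompact_Icc.of_isClosed_subset isClosed subset_Icc

theorem sum_eq_of_mem_openSegment {y z : ι → ℝ} (hy : y ∈ polymatroid f)
    (hz : z ∈ polymatroid f) (hx : x ∈ openSegment ℝ y z) {I : Finset ι} (hI : I.Nonempty)
    (htight : ∑ i ∈ I, x i = f I) : ∑ i ∈ I, y i = f I := by
  obtain ⟨a, b, ha, hb, hab, rfl⟩ := hx
  simp only [Pi.add_apply, Pi.smul_apply, smul_eq_mul, sum_add_distrib, ← mul_sum] at htight
  have hyI := hy.2 I hI
  have hzI := hz.2 I hI
  by_contra hne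
  have hlt := lt_of_le_of_ne hyI hne
  have hsplit : f I = a * f I + b * f I := by rw [← add_mul, hab, one_mul]
  linarith [mul_lt_mul_of_pos_left hlt ha, mul_le_mul_of_nonneg_left hzI hb.le]

theorem sum_inter_eq (hx : x ∈ polymatroid f) [DecidableEq ι]
    (hsub : ∀ I J, f (I ∩ J) + f (I ∪ J) ≤ f I + f J) {I J : Finset ι}
    (hIJ : (I ∩ J).Nonempty) (hI : ∑ i ∈ I, x i = f I) (hJ : ∑ i ∈ J, x i = f J) :
    ∑ i ∈ I ∩ J, x i = f (I ∩ J) := by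
  have hunion := hx.2 (I ∪ J) (hIJ.mono inter_subset_union)
  have := sum_union_inter (s₁ := I) (s₂ := J) (f := x)
  linarith [hx.2 _ hIJ, hsub I J]

theorem eventually_add_smul_mem [Finite ι] {d : ι → ℝ} (hx : x ∈ polymatroid f)
    (hd : ∀ i, d i ≠ 0 → 0 < x i)
    (htight : ∀ I : Finset ι, I.Nonempty → ∑ i ∈ I, x i = f I → ∑ i ∈ I, d i = 0) :
    ∀ᶠ t in 𝓝 (0 : ℝ), x + t • d ∈ polymatroid f := by
  have hlim : Tendsto (fun t : ℝ => x + t • d) (𝓝 0) (𝓝 x) :=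
    Continuous.tendsto' (by fun_prop) 0 x (by simp)
  refine (eventually_all.2 fun i => ?_).and (eventually_all.2 fun I => ?_)
  · by_cases hdi : d i = 0
    · exact .of_forall fun t => by simpa [hdi] using hx.1 i
    · exact ((continuous_apply i).tendsto x |>.comp hlim).eventually_const_lt (hd i hdi)
        |>.mono fun t ht => ht.le
  · by_cases hI : I.Nonempty
    · rcases (hx.2 I hI).eq_or_lt with hIx | hIx
      · refine .of_forall fun t _ => ?_
        simp [sum_add_distrib, ← mul_sum, htight I hI hIx, hIx]
      · exact ((continuous_finsetSum I fun i _ => continuous_apply i).tendsto x |>.comp hlim)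
          |>.eventually_lt_const hIx |>.mono fun t ht _ => ht.le
    · exact .of_forall fun t h => absurd h hI

theorem eq_zero_of_mem_extremePoints [Finite ι] {d : ι → ℝ}
    (hx : x ∈ (polymatroid f).extremePoints ℝ) (hd : ∀ i, d i ≠ 0 → 0 < x i)
    (htight : ∀ I : Finset ι, I.Nonempty → ∑ i ∈ I, x i = f I → ∑ i ∈ I, d i = 0) : d = 0 :=
  eq_zero_of_mem_extremePoints_of_eventually_add_smul_mem hx
    (eventually_add_smul_mem hx.1 hd htight)

theorem exists_mem_sum_eq_of_mem_extremePoints [Finite ι] [DecidableEq ι]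
    (hx : x ∈ (polymatroid f).extremePoints ℝ) {i : ι} (hi : 0 < x i) :
    ∃ I : Finset ι, I.Nonempty ∧ ∑ j ∈ I, x j = f I ∧ i ∈ I := by
  by_contra! hnone
  have hd := eq_zero_of_mem_extremePoints hx (d := Pi.single i 1)
    (fun j hj => by
      obtain rfl : j = i := by by_contra h; simp [h] at hj
      exact hi)
    (fun I hI htI => by simp [sum_pi_single', hnone I hI htI])
  simpa using congrFun hd i

theorem eq_of_forall_sum_eq_mem_iff [Finite ι] [DecidableEq ι]
    (hx : x ∈ (polymatroid f).extremePoints ℝ) {j k : ι} (hj : 0 < x j) (hk : 0 < x k)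
    (hjk : ∀ I : Finset ι, I.Nonempty → ∑ i ∈ I, x i = f I → (j ∈ I ↔ k ∈ I)) : j = k := by
  by_contra hne
  have hd := eq_zero_of_mem_extremePoints hx (d := Pi.single j 1 - Pi.single k 1)
    (fun i hi => by
      by_cases hij : i = j
      · exact hij ▸ hj
      · by_cases hik : i = k
        · exact hik ▸ hk
        · simp [hij, hik] at hi)
    (fun I hI htI => by simp [sum_sub_distrib, sum_pi_single', hjk I hI htI])
  simpa [hne] using congrFun hd j

theorem exists_int_of_mem_extremePoints [Fintype ι] [DecidableEq ι]
    (hsub : ∀ I J, f (I ∩ J) + f (I ∪ J) ≤ f I + f J) (hint : ∀ I, ∃ m : ℤ, f I = m)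
    (hx : x ∈ (polymatroid f).extremePoints ℝ) (i : ι) : ∃ m : ℤ, x i = m := by
  classical
  by_contra hi
  set S := univ.filter fun j => ¬∃ m : ℤ, x j = m
  have hpos : ∀ j ∈ S, 0 < x j := fun j hj =>
    (hx.1.1 j).lt_of_ne fun h => (mem_filter.1 hj).2 ⟨0, by simp [← h]⟩
  let IsTightMeetingS (I : Finset ι) : Prop :=
    I.Nonempty ∧ ∑ j ∈ I, x j = f I ∧ (I ∩ S).Nonempty
  have hiS : i ∈ S := by simpa [S] using hi
  obtain ⟨I₀, hI₀, hI₀t, hiI₀⟩ := exists_mem_sum_eq_of_mem_extremePoints hx (hpos i hiS)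
  obtain ⟨I, -, hImin⟩ := exists_minimal_le_of_wellFoundedLT IsTightMeetingS I₀
    ⟨hI₀, hI₀t, i, mem_inter.2 ⟨hiI₀, hiS⟩⟩
  obtain ⟨-, hIt, hIS⟩ := hImin.prop
  have hsubset : ∀ J, ∑ j ∈ J, x j = f J → ∀ k ∈ I ∩ S, k ∈ J → I ⊆ J := by
    intro J hJt k hk hkJ
    have hIJ : (I ∩ J).Nonempty := ⟨k, mem_inter.2 ⟨(mem_inter.1 hk).1, hkJ⟩⟩
    have hIJS : IsTightMeetingS (I ∩ J) :=
      ⟨hIJ, sum_inter_eq hx.1 hsub hIJ hIt hJt, k, by simp_all⟩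
    exact inter_eq_left.1 (subset_antisymm inter_subset_left
      (hImin.le_of_le hIJS inter_subset_left))
  -- the coordinates of `x` on `I` sum to the integer `f I`, so `I` meets `S` at least twice
  obtain ⟨j, hj, k, hk, hjk⟩ : (I ∩ S).Nontrivial := by
    refine hIS.exists_eq_singleton_or_nontrivial.resolve_left ?_
    rintro ⟨j, hj⟩
    have hjS : j ∈ S := mem_of_mem_inter_right (hj ▸ mem_singleton_self j)
    obtain ⟨m₁, hm₁⟩ := hint I
    obtain ⟨m₂, hm₂⟩ := exists_int_eq_sum (s := I \ S) (g := x) fun l hl => by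
      simpa [S] using (mem_sdiff.1 hl).2
    have := sum_inter_add_sum_sdiff I S x
    rw [hj, sum_singleton] at this
    exact (mem_filter.1 hjS).2 ⟨m₁ - m₂, by push_cast; linarith⟩
  refine hjk (eq_of_forall_sum_eq_mem_iff hx (hpos j (mem_inter.1 hj).2)
    (hpos k (mem_inter.1 hk).2) fun J _ hJt => ?_)
  exact ⟨fun h => hsubset J hJt j hj h (mem_inter.1 hk).1,
    fun h => hsubset J hJt k hk h (mem_inter.1 hj).1⟩

end polymatroid

theorem Antitone.sum_range_add_add_le {g : ℕ → ℝ} (hg : Antitone g) {b d : ℕ} (hdb : d ≤ b)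
    (m : ℕ) : ∑ i ∈ range (b + m), g i + ∑ i ∈ range d, g i ≤
      ∑ i ∈ range (d + m), g i + ∑ i ∈ range b, g i := by
  rw [sum_range_add, sum_range_add]
  linarith [sum_le_sum fun i (_ : i ∈ range m) => hg (Nat.add_le_add_right hdb i)]

namespace SIM

variable {n : ℕ}

def prefixSum (u : Fin n → ℝ) (k : ℕ) : ℝ :=
  ∑ j ∈ univ.filter (fun j : Fin n => (j : ℕ) < k), u j

def extendByZero (u : Fin n → ℝ) (k : ℕ) : ℝ :=
  if h : k < n then u ⟨k, h⟩ else 0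

theorem eq_polymatroid (α : Fin n → ℝ) : SIM α = polymatroid fun I => prefixSum α I.card := rfl

@[simp]
theorem extendByZero_val (u : Fin n → ℝ) (i : Fin n) : extendByZero u i = u i := by
  simp [extendByZero]

theorem antitone_extendByZero {α : Fin n → ℝ} (hα : Antitone α) (h0 : 0 ≤ α) :
    Antitone (extendByZero α) := by
  intro a b hab
  unfold extendByZero
  split_ifs with hb ha ha
  · exact hα (show (⟨a, ha⟩ : Fin n) ≤ ⟨b, hb⟩ from hab)
  · omega
  · exact h0 _
  · rfl

theorem prefixSum_succ (u : Fin n → ℝ) (k : ℕ) :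
    prefixSum u (k + 1) = prefixSum u k + extendByZero u k := by
  unfold prefixSum extendByZero
  split_ifs with hk
  · have hk' : (⟨k, hk⟩ : Fin n) ∉ univ.filter fun j : Fin n => (j : ℕ) < k := by simp
    conv_rhs => rw [add_comm, ← sum_insert hk']
    congr 1
    ext j
    simp [Fin.ext_iff]
    omega
  · rw [add_zero]
    congr 1
    ext j
    simp
    omega

theorem prefixSum_eq_sum_range (u : Fin n → ℝ) (k : ℕ) :
    prefixSum u k = ∑ j ∈ range k, extendByZero u j := by
  induction k with
  | zero => simp [prefixSum]
  | succ k ih => rw [prefixSum_succ, sum_range_succ, ih]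

theorem exists_int_prefixSum {u : Fin n → ℝ} (hu : ∀ i, ∃ m : ℤ, u i = m) (k : ℕ) :
    ∃ m : ℤ, prefixSum u k = m :=
  exists_int_eq_sum fun i _ => hu i

theorem prefixSum_card_inter_add_union_le {α : Fin n → ℝ} (hα : Antitone α) (h0 : 0 ≤ α)
    (I J : Finset (Fin n)) :
    prefixSum α (I ∩ J).card + prefixSum α (I ∪ J).card ≤
      prefixSum α I.card + prefixSum α J.card := by
  obtain ⟨m, hI, hIJ⟩ : ∃ m, I.card = (I ∩ J).card + m ∧ (I ∪ J).card = J.card + m := by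
    have := card_union_add_card_inter I J
    have := card_le_card (inter_subset_left (s₁ := I) (s₂ := J))
    exact ⟨I.card - (I ∩ J).card, by omega, by omega⟩
  simp only [prefixSum_eq_sum_range, hI, hIJ]
  linarith [(antitone_extendByZero hα h0).sum_range_add_add_le
    (card_le_card (inter_subset_right (s₁ := I) (s₂ := J))) m]

theorem sum_le_prefixSum_card {α : Fin n → ℝ} (hα : Antitone α) (h0 : 0 ≤ α)
    (I : Finset (Fin n)) : ∑ i ∈ I, α i ≤ prefixSum α I.card := by
  induction I using induction_on_max with
  | empty => simp [prefixSum]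
  | insert a s hlt ih =>
    have hcard : s.card ≤ a := by
      simpa using card_le_card (fun x hx => mem_Iio.2 (hlt x hx) : s ⊆ Iio a)
    rw [sum_insert fun ha => lt_irrefl a (hlt a ha), card_insert_of_notMem
      fun ha => lt_irrefl a (hlt a ha), prefixSum_succ]
    linarith [antitone_extendByZero hα h0 hcard, extendByZero_val α a]

theorem mem_self {α : Fin n → ℝ} (hα : Antitone α) (h0 : 0 ≤ α) : α ∈ SIM α :=
  ⟨h0, fun I _ => sum_le_prefixSum_card hα h0 I⟩

theorem mem_extremePoints_self {α : Fin n → ℝ} (hα : Antitone α) (h0 : 0 ≤ α) :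
    α ∈ (SIM α).extremePoints ℝ := by
  refine ⟨mem_self hα h0, fun y hy z hz hα_mem => ?_⟩
  have htight : ∀ k ≤ n, prefixSum y k = prefixSum α k := by
    intro k hk
    rcases k.eq_zero_or_pos with rfl | hk0
    · simp [prefixSum]
    have hcard : (univ.filter fun j : Fin n => (j : ℕ) < k).card = k := by
      rw [Fin.card_filter_val_lt, min_eq_right hk]
    have := polymatroid.sum_eq_of_mem_openSegment hy hz hα_mem
      (I := univ.filter fun j : Fin n => (j : ℕ) < k) ⟨⟨0, by omega⟩, by simpa using hk0⟩
      (by rw [hcard])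
    rwa [hcard] at this
  funext i
  have := htight (i + 1) i.isLt
  rw [prefixSum_succ, prefixSum_succ, htight i i.isLt.le] at this
  simpa using this

end SIM

/-- the SIM-body is bounded (hence compact), and all its extreme points have
integer coordinates if and only if all the parameters are integers. -/
theorem sim_body_bounded_integral (n : ℕ) (α : Fin n → ℝ)
    (hdec : ∀ i j : Fin n, i ≤ j → α j ≤ α i) (hnonneg : ∀ i, 0 ≤ α i) :
    Bornology.IsBounded (SIM α) ∧ IsCompact (SIM α) ∧
      ((∀ x ∈ Set.extremePoints ℝ (SIM α), ∀ i, ∃ m : ℤ, x i = m) ↔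
        ∀ i, ∃ m : ℤ, α i = m) := by
  have hα : Antitone α := fun i j => hdec i j
  have hcompact : IsCompact (SIM α) := polymatroid.isCompact
  refine ⟨hcompact.isBounded, hcompact, fun h => h α (SIM.mem_extremePoints_self hα hnonneg),
    fun h x hx => ?_⟩
  rw [SIM.eq_polymatroid] at hx
  exact polymatroid.exists_int_of_mem_extremePoints
    (SIM.prefixSum_card_inter_add_union_le hα hnonneg) (fun I => SIM.exists_int_prefixSum h _) hx
end

section
/- Let α₁ > α₂ > ⋯ > αₙ > 0 be real numbers and let Λ = Λ(α₁,…,αₙ) be the corresponding proper SIM-body. Then for every extreme point v of Λ, the total number of defining constraints of Λ that are tight at v equals exactly n; that is, the number of indices i ∈ {1,…,n} with v_i = 0 plus the number of nonempty subsets I ⊆ {1,…,n} with Σ_{i∈I} v_i = α₁ + ⋯ + α_{|I|} equals n. (In particular, the proper SIM-body is a simple polytope.) -/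
open Finset

/-!
Write `F k = α₁ + ⋯ + αₖ`. Since the `αᵢ` decrease strictly, `F` is strictly concave, so two
incomparable tight sets `I, J` are impossible:
`∑_{I ∪ J} v + ∑_{I ∩ J} v = F |I| + F |J| > F |I ∪ J| + F |I ∩ J|`.
The tight sets therefore form a chain and have distinct sizes. Since `F` is strictly increasing,
a tight set contains no zero coordinate of `v`, so there are at most `n - #{i | vᵢ = 0}` of them.
Conversely, at an extreme point `v`, a direction `d` on which every tight constraint vanishes can
be added to `v` with a small coefficient of either sign, hence `d = 0`: the tight constraints
have trivial common kernel, so there are at least `n` of them.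
-/

open Filter Topology

lemma eventually_add_mul_le {a b c : ℝ} (hab : a ≤ b) (hc : a = b → c = 0) :
    ∀ᶠ t in 𝓝 (0 : ℝ), a + t * c ≤ b := by
  rcases hab.eq_or_lt with rfl | hlt
  · simp [hc rfl]
  · have : Tendsto (fun t : ℝ => a + t * c) (𝓝 0) (𝓝 a) :=
      (by fun_prop : Continuous fun t : ℝ => a + t * c).tendsto' 0 a (by simp)
    exact (this.eventually_lt_const hlt).mono fun _ => le_of_lt

lemma eq_zero_of_mem_extremePoints_of_eventually_add_smul_mem_s5 {E : Type*} [AddCommGroup E]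
    [Module ℝ E] {S : Set E} {v d : E} (hv : v ∈ S.extremePoints ℝ)
    (hd : ∀ᶠ t in 𝓝 (0 : ℝ), v + t • d ∈ S) : d = 0 := by
  obtain ⟨ε, hε, hball⟩ := Metric.eventually_nhds_iff.1 hd
  have hsmall : ∀ s : ℝ, |s| = ε / 2 → v + s • d ∈ S := fun s hs =>
    hball (by rw [Real.dist_0_eq_abs, hs]; linarith)
  have hplus := hsmall (ε / 2) (abs_of_pos (by positivity))
  have hminus := hsmall (-(ε / 2)) (by rw [abs_neg, abs_of_pos (by positivity)])
  have hmid : v ∈ openSegment ℝ (v + (ε / 2) • d) (v + (-(ε / 2)) • d) :=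
    ⟨1 / 2, 1 / 2, by norm_num, by norm_num, by norm_num, by module⟩
  have hfix : v + (ε / 2) • d = v := hv.2 hplus hminus hmid
  simpa [hε.ne'] using hfix

lemma add_lt_add_of_sub_strictAnti {f : ℕ → ℝ} {n : ℕ}
    (hf : ∀ i j, i < j → j < n → f (j + 1) - f j < f (i + 1) - f i)
    {p q a b : ℕ} (hsum : p + q = a + b) (hpa : p < a) (hpb : p < b) (hq : q ≤ n) :
    f p + f q < f a + f b := by
  obtain ⟨m, rfl⟩ : ∃ m, a = p + m := ⟨a - p, by omega⟩
  obtain rfl : q = b + m := by omega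
  have hincr : ∀ r, f (r + m) - f r = ∑ k ∈ range m, (f (r + k + 1) - f (r + k)) := fun r =>
    (sum_range_sub (fun k => f (r + k)) m).symm
  have hlt : ∑ k ∈ range m, (f (b + k + 1) - f (b + k)) <
      ∑ k ∈ range m, (f (p + k + 1) - f (p + k)) :=
    sum_lt_sum_of_nonempty (nonempty_range_iff.2 (by omega)) fun k hk => by
      have := mem_range.1 hk
      exact hf _ _ (by omega) (by omega)
  linarith [hincr p, hincr b]

section SIM

variable {n : ℕ} (α : Fin n → ℝ)

/-- `α₁ + ⋯ + αₖ` in the paper's 1-based indexing. -/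
def simBound (k : ℕ) : ℝ :=
  ∑ j ∈ univ.filter (fun j : Fin n => (j : ℕ) < k), α j

@[simp]
lemma simBound_zero : simBound α 0 = 0 := by
  simp [simBound]

lemma simBound_succ {k : ℕ} (hk : k < n) : simBound α (k + 1) = simBound α k + α ⟨k, hk⟩ := by
  have : univ.filter (fun j : Fin n => (j : ℕ) < k + 1) =
      insert ⟨k, hk⟩ (univ.filter fun j : Fin n => (j : ℕ) < k) := by
    ext j
    simp only [mem_filter, mem_univ, true_and, mem_insert, Fin.ext_iff]
    omega
  rw [simBound, this, sum_insert (by simp), add_comm]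
  rfl

lemma simBound_add_lt_add (hdec : ∀ i j : Fin n, i < j → α j < α i)
    {p q a b : ℕ} (hsum : p + q = a + b) (hpa : p < a) (hpb : p < b) (hq : q ≤ n) :
    simBound α p + simBound α q < simBound α a + simBound α b := by
  refine add_lt_add_of_sub_strictAnti (fun i j hij hj => ?_) hsum hpa hpb hq
  rw [simBound_succ α hj, simBound_succ α (hij.trans hj)]
  simpa using hdec ⟨i, _⟩ ⟨j, hj⟩ hij

def IsTight (v : Fin n → ℝ) (I : Finset (Fin n)) : Prop :=
  ∑ i ∈ I, v i = simBound α I.card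

variable {α} {v : Fin n → ℝ}

lemma sum_le_simBound (hv : v ∈ SIM α) (I : Finset (Fin n)) :
    ∑ i ∈ I, v i ≤ simBound α I.card := by
  rcases I.eq_empty_or_nonempty with rfl | hI
  · simp
  · exact hv.2 I hI

lemma IsTight.subset_or_subset (hdec : ∀ i j : Fin n, i < j → α j < α i) (hv : v ∈ SIM α)
    {I J : Finset (Fin n)} (hI : IsTight α v I) (hJ : IsTight α v J) : I ⊆ J ∨ J ⊆ I := by
  classical
  by_contra! h
  have hconcave := simBound_add_lt_add α hdec (card_inter_add_card_union I J)
    (card_lt_card (inf_lt_left.2 h.1)) (card_lt_card (inf_lt_right.2 h.2))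
    ((I ∪ J).card_le_univ.trans_eq (Fintype.card_fin n))
  have hunion := sum_le_simBound hv (I ∪ J)
  have hinter := sum_le_simBound hv (I ∩ J)
  have hmodular : ∑ i ∈ I ∪ J, v i + ∑ i ∈ I ∩ J, v i = ∑ i ∈ I, v i + ∑ i ∈ J, v i :=
    sum_union_inter
  rw [IsTight] at hI hJ
  linarith

lemma IsTight.ne_zero_of_mem (hpos : ∀ i, 0 < α i) (hv : v ∈ SIM α) {I : Finset (Fin n)}
    (hI : IsTight α v I) {i : Fin n} (hi : i ∈ I) : v i ≠ 0 := by
  intro hvi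
  have hcard : (I.erase i).card + 1 = I.card := card_erase_add_one hi
  have hlt : (I.erase i).card < n := by
    have := I.card_le_univ.trans_eq (Fintype.card_fin n)
    omega
  have hsum : ∑ j ∈ I.erase i, v j = ∑ j ∈ I, v j := sum_erase I hvi
  have hle := sum_le_simBound hv (I.erase i)
  rw [IsTight, ← hcard, simBound_succ α hlt] at hI
  linarith [hpos ⟨_, hlt⟩]

lemma ncard_tight_le_ncard_compl_zero (hdec : ∀ i j : Fin n, i < j → α j < α i)
    (hpos : ∀ i, 0 < α i) (hv : v ∈ SIM α) :
    {I : Finset (Fin n) | I.Nonempty ∧ IsTight α v I}.ncard ≤ {i | v i = 0}ᶜ.ncard := by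
  have hmaps : ∀ I ∈ {I : Finset (Fin n) | I.Nonempty ∧ IsTight α v I},
      I.card ∈ Set.Icc 1 {i | v i = 0}ᶜ.ncard := by
    rintro I ⟨hne, hI⟩
    refine ⟨hne.card_pos, ?_⟩
    rw [← Set.ncard_coe_finset]
    exact Set.ncard_le_ncard fun i hi => hI.ne_zero_of_mem hpos hv hi
  have hinj : Set.InjOn card {I : Finset (Fin n) | I.Nonempty ∧ IsTight α v I} := by
    rintro I ⟨-, hI⟩ J ⟨-, hJ⟩ hcard
    rcases hI.subset_or_subset hdec hv hJ with h | h
    · exact eq_of_subset_of_card_le h hcard.ge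
    · exact (eq_of_subset_of_card_le h hcard.le).symm
  simpa using Set.ncard_le_ncard_of_injOn card hmaps hinj

lemma eventually_add_smul_mem_SIM (hv : v ∈ SIM α) {d : Fin n → ℝ}
    (hzero : ∀ i, v i = 0 → d i = 0)
    (htight : ∀ I, I.Nonempty → IsTight α v I → ∑ i ∈ I, d i = 0) :
    ∀ᶠ t in 𝓝 (0 : ℝ), v + t • d ∈ SIM α := by
  have hcoord : ∀ i, ∀ᶠ t in 𝓝 (0 : ℝ), -v i + t * -d i ≤ 0 := fun i =>
    eventually_add_mul_le (by linarith [hv.1 i]) fun h => by simp [hzero i (neg_eq_zero.1 h)]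
  have hsets : ∀ I : Finset (Fin n), I.Nonempty →
      ∀ᶠ t in 𝓝 (0 : ℝ), ∑ i ∈ I, v i + t * ∑ i ∈ I, d i ≤ simBound α I.card := fun I hI =>
    eventually_add_mul_le (sum_le_simBound hv I) (htight I hI)
  filter_upwards [eventually_all.2 hcoord,
    eventually_all.2 fun I => eventually_imp_distrib_left.2 (hsets I)] with t ht hI
  refine ⟨fun i => ?_, fun I hne => ?_⟩
  · simp only [Pi.add_apply, Pi.smul_apply, smul_eq_mul]
    linarith [ht i]
  · simpa [sum_add_distrib, mul_sum, simBound] using hI I hne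

lemma le_ncard_zero_add_ncard_tight (hv : v ∈ (SIM α).extremePoints ℝ) :
    n ≤ {i | v i = 0}.ncard + {I : Finset (Fin n) | I.Nonempty ∧ IsTight α v I}.ncard := by
  classical
  set W := {i | v i = 0}
  set T := {I : Finset (Fin n) | I.Nonempty ∧ IsTight α v I}
  let ψ : (Fin n → ℝ) →ₗ[ℝ] (W → ℝ) × (T → ℝ) :=
    (LinearMap.pi fun i : W => LinearMap.proj (i : Fin n)).prod
      (LinearMap.pi fun I : T => ∑ j ∈ (I : Finset (Fin n)), LinearMap.proj j)
  have hψ : Function.Injective ψ := by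
    rw [← LinearMap.ker_eq_bot, LinearMap.ker_eq_bot']
    intro d hd
    refine eq_zero_of_mem_extremePoints_of_eventually_add_smul_mem_s5 hv
      (eventually_add_smul_mem_SIM hv.1 (fun i hi => ?_) fun I hne hI => ?_)
    · simpa [ψ] using congr_fun (congr_arg Prod.fst hd) ⟨i, hi⟩
    · simpa [ψ] using congr_fun (congr_arg Prod.snd hd) ⟨I, hne, hI⟩
  simpa [Module.finrank_fintype_fun_eq_card, Nat.card_coe_set_eq, ← Nat.card_eq_fintype_card,
    Nat.card_fin] using LinearMap.finrank_le_finrank_of_injective hψ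

end SIM

theorem proper_sim_body_simple_general (n : ℕ) (α : Fin n → ℝ)
    (hdec : ∀ i j : Fin n, i < j → α j < α i) (hpos : ∀ i, 0 < α i) :
    ∀ v ∈ Set.extremePoints ℝ (SIM α),
      {i : Fin n | v i = 0}.ncard +
          {I : Finset (Fin n) | I.Nonempty ∧
            ∑ i ∈ I, v i =
              ∑ j ∈ Finset.univ.filter (fun j : Fin n => (j : ℕ) < I.card), α j}.ncard = n := by
  intro v hv
  have hlower := le_ncard_zero_add_ncard_tight hv
  have hupper := ncard_tight_le_ncard_compl_zero hdec hpos hv.1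
  have hsplit : {i | v i = 0}.ncard + {i | v i = 0}ᶜ.ncard = n := by
    simpa using Set.ncard_add_ncard_compl {i | v i = 0}
  change _ + {I : Finset (Fin n) | I.Nonempty ∧ IsTight α v I}.ncard = n
  omega

/-- a proper SIM-body is simple: at each extreme point `v`, the number of
nonnegativity constraints tight at `v` plus the number of subset-sum constraints tight at `v`
equals exactly `n`. -/
theorem proper_sim_body_simple (n : ℕ) (hn : 1 ≤ n) (α : Fin n → ℝ)
    (hdec : ∀ i j : Fin n, i < j → α j < α i) (hpos : ∀ i, 0 < α i) :
    ∀ v ∈ Set.extremePoints ℝ (SIM α),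
      {i : Fin n | v i = 0}.ncard +
          {I : Finset (Fin n) | I.Nonempty ∧
            ∑ i ∈ I, v i =
              ∑ j ∈ Finset.univ.filter (fun j : Fin n => (j : ℕ) < I.card), α j}.ncard = n :=
  proper_sim_body_simple_general n α hdec hpos
end

section
/- Let n ≥ 1 and let p be a price schedule for n items. Let I ⊆ [n] be such that the n-dimensional Lebesgue measure of the region D_I is positive. Then p_I < p_J for every subset J ⊆ [n] with J ⊋ I. -/
open Finset MeasureTheory

/-- The region `D_I` of a price schedule `p`: the set of valuations in the unit cube for
which buying the bundle `I` maximizes the buyer's utility. -/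
def region {n : ℕ} (p : Finset (Fin n) → ℝ) (I : Finset (Fin n)) : Set (Fin n → ℝ) :=
  {x | (∀ i, x i ∈ Set.Icc (0 : ℝ) 1) ∧
    ∀ J : Finset (Fin n), ∑ j ∈ J, x j - p J ≤ ∑ i ∈ I, x i - p I}

/-! If `p_J ≤ p_I` for some `J ⊋ I`, a buyer in `D_I` gains `x_j ≥ 0` for every `j ∈ J \ I` by
switching to `J`, so optimality of `I` forces `x_j = 0`: the region lies in a coordinate
hyperplane, which is Lebesgue-null. -/

theorem volume_setOf_apply_eq_zero {ι : Type*} [Fintype ι] (j : ι) :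
    volume {x : ι → ℝ | x j = 0} = 0 := by
  have hker : {x : ι → ℝ | x j = 0} = LinearMap.ker (LinearMap.proj j : (ι → ℝ) →ₗ[ℝ] ℝ) := by
    ext x
    simp [LinearMap.mem_ker]
  rw [hker]
  refine Measure.addHaar_submodule _ _ fun htop => ?_
  have hone : (fun _ => (1 : ℝ)) ∈ LinearMap.ker (LinearMap.proj j : (ι → ℝ) →ₗ[ℝ] ℝ) :=
    htop ▸ Submodule.mem_top
  simp at hone

section region

variable {n : ℕ} {p : Finset (Fin n) → ℝ} {I J : Finset (Fin n)}

theorem sum_sdiff_le_sub_of_mem_region {x : Fin n → ℝ} (hx : x ∈ region p I) (hIJ : I ⊆ J) :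
    ∑ k ∈ J \ I, x k ≤ p J - p I := by
  have hsplit := Finset.sum_sdiff (f := x) hIJ
  linarith [hx.2 J]

theorem region_subset_setOf_apply_eq_zero (hIJ : I ⊆ J) {j : Fin n} (hj : j ∈ J \ I)
    (hp : p J ≤ p I) : region p I ⊆ {x | x j = 0} := by
  intro x hx
  have hnonneg : ∀ k, 0 ≤ x k := fun k => (hx.1 k).1
  have hle : x j ≤ ∑ k ∈ J \ I, x k := Finset.single_le_sum (fun k _ => hnonneg k) hj
  have := sum_sdiff_le_sub_of_mem_region hx hIJ
  exact le_antisymm (by linarith) (hnonneg j)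

theorem volume_region_eq_zero (hIJ : I ⊆ J) {j : Fin n} (hj : j ∈ J \ I) (hp : p J ≤ p I) :
    volume (region p I) = 0 :=
  measure_mono_null (region_subset_setOf_apply_eq_zero hIJ hj hp) (volume_setOf_apply_eq_zero j)

end region

theorem price_strict_mono_of_pos_volume_general (n : ℕ) (p : Finset (Fin n) → ℝ)
    (I : Finset (Fin n)) (hvol : 0 < volume (region p I)) :
    ∀ J : Finset (Fin n), I ⊂ J → p I < p J := by
  intro J hIJ
  by_contra! hp
  obtain ⟨j, hjJ, hjI⟩ := Finset.exists_of_ssubset hIJ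
  exact hvol.ne' (volume_region_eq_zero hIJ.subset (Finset.mem_sdiff.mpr ⟨hjJ, hjI⟩) hp)

/-- if the region `D_I` has positive `n`-dimensional Lebesgue measure, then
`p_I < p_J` for every strict superset `J ⊋ I`. -/
theorem price_strict_mono_of_pos_volume (n : ℕ) (hn : 1 ≤ n) (p : Finset (Fin n) → ℝ)
    (hp0 : p ∅ = 0) (I : Finset (Fin n)) (hvol : 0 < volume (region p I)) :
    ∀ J : Finset (Fin n), I ⊂ J → p I < p J :=
  price_strict_mono_of_pos_volume_general n p I hvol
end

section
/- Let n ≥ 1 and let p be a price schedule for n items. Let I ⊆ [n] be such that vol_n(D_J) > 0 for every subset J ⊆ I. Then for every J ⊆ I, the coordinate projection of D_J onto the coordinates indexed by I satisfies π_I(D_J) = {x ∈ [0,1]^I : Σ_{j∈J} x_j − p_J ≥ Σ_{j∈K} x_j − p_K for all K ⊆ I}. -/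
/-!
A point `y ∈ [0,1]^I` satisfying the inequalities for all `K ⊆ I` lifts to `D_J` by extending
it by zero outside `I`: for arbitrary `K` the lift gains `Σ_{K ∩ I} y - p (K ∩ I)` from bundle `K`
and pays `p K`, so it suffices that `p (K ∩ I) ≤ p K`. That monotonicity is witnessed by any point
of `D_{K ∩ I}`, which is nonempty since it has positive volume.
-/

open Finset MeasureTheory

/-- The coordinate projection `π_I` of a subset of `ℝⁿ` onto the coordinates in `I`. -/
def projSet {n : ℕ} (I : Finset (Fin n)) (S : Set (Fin n → ℝ)) : Set ({i // i ∈ I} → ℝ) :=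
  (fun x (i : {i // i ∈ I}) => x i.1) '' S

section ZeroExtend

variable {ι M : Type*} [DecidableEq ι] [AddCommMonoid M]

lemma sum_filter_val_mem (I K : Finset ι) (f : ι → M) :
    ∑ j ∈ univ.filter (fun j : {i // i ∈ I} => j.1 ∈ K), f j = ∑ j ∈ K with j ∈ I, f j := by
  rw [← sum_subtype_eq_sum_filter (s := K)]
  refine sum_congr ?_ fun _ _ => rfl
  ext j
  simp

lemma sum_filter_val_mem_of_subset {I K : Finset ι} (hK : K ⊆ I) (f : ι → M) :
    ∑ j ∈ univ.filter (fun j : {i // i ∈ I} => j.1 ∈ K), f j = ∑ j ∈ K, f j := by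
  rw [sum_filter_val_mem, filter_true_of_mem hK]

def zeroExtend (I : Finset ι) (y : {i // i ∈ I} → M) : ι → M :=
  fun i => if h : i ∈ I then y ⟨i, h⟩ else 0

@[simp]
lemma zeroExtend_val (I : Finset ι) (y : {i // i ∈ I} → M) (i : {i // i ∈ I}) :
    zeroExtend I y i = y i := by
  simp [zeroExtend]

lemma zeroExtend_of_notMem {I : Finset ι} (y : {i // i ∈ I} → M) {i : ι} (hi : i ∉ I) :
    zeroExtend I y i = 0 := by
  simp [zeroExtend, hi]

lemma sum_zeroExtend (I K : Finset ι) (y : {i // i ∈ I} → M) :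
    ∑ j ∈ K, zeroExtend I y j = ∑ j ∈ univ.filter (fun j : {i // i ∈ I} => j.1 ∈ K), y j := by
  simp_rw [← zeroExtend_val I y, sum_filter_val_mem]
  refine (sum_filter_of_ne fun j _ hj => ?_).symm
  by_contra hjI
  exact hj (zeroExtend_of_notMem y hjI)

end ZeroExtend

section Region

variable {n : ℕ}

lemma price_le_of_mem_region {p : Finset (Fin n) → ℝ} {L K : Finset (Fin n)} {z : Fin n → ℝ}
    (hz : z ∈ region p L) (hLK : L ⊆ K) : p L ≤ p K := by
  have hsum : ∑ j ∈ L, z j ≤ ∑ j ∈ K, z j :=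
    sum_le_sum_of_subset_of_nonneg hLK fun j _ _ => (hz.1 j).1
  linarith [hz.2 K]

lemma projSet_region_subset (p : Finset (Fin n) → ℝ) {I J : Finset (Fin n)} (hJ : J ⊆ I) :
    projSet I (region p J) ⊆
      {y : {i // i ∈ I} → ℝ | (∀ i, y i ∈ Set.Icc (0 : ℝ) 1) ∧
        ∀ K ⊆ I,
          ∑ j ∈ univ.filter (fun j : {i // i ∈ I} => j.1 ∈ K), y j - p K ≤
            ∑ j ∈ univ.filter (fun j : {i // i ∈ I} => j.1 ∈ J), y j - p J} := by
  rintro _ ⟨x, ⟨hx01, hxle⟩, rfl⟩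
  refine ⟨fun i => hx01 i, fun K hK => ?_⟩
  rw [sum_filter_val_mem_of_subset hK, sum_filter_val_mem_of_subset hJ]
  exact hxle K

lemma zeroExtend_mem_region {p : Finset (Fin n) → ℝ} {I J : Finset (Fin n)}
    (hmono : ∀ K, p (K ∩ I) ≤ p K) {y : {i // i ∈ I} → ℝ}
    (hy01 : ∀ i, y i ∈ Set.Icc (0 : ℝ) 1)
    (hyle : ∀ K ⊆ I,
      ∑ j ∈ univ.filter (fun j : {i // i ∈ I} => j.1 ∈ K), y j - p K ≤
        ∑ j ∈ univ.filter (fun j : {i // i ∈ I} => j.1 ∈ J), y j - p J) :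
    zeroExtend I y ∈ region p J := by
  refine ⟨fun i => ?_, fun K => ?_⟩
  · by_cases hi : i ∈ I
    · simpa [zeroExtend, hi] using hy01 ⟨i, hi⟩
    · simp [zeroExtend_of_notMem y hi]
  · have hKI : univ.filter (fun j : {i // i ∈ I} => j.1 ∈ K) =
        univ.filter (fun j : {i // i ∈ I} => j.1 ∈ K ∩ I) := by
      ext j
      simp
    rw [sum_zeroExtend, sum_zeroExtend, hKI]
    linarith [hyle (K ∩ I) inter_subset_right, hmono K]
end Region

theorem projection_shape_general (n : ℕ) (p : Finset (Fin n) → ℝ)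
    (I : Finset (Fin n)) (hvol : ∀ J ⊆ I, 0 < volume (region p J)) :
    ∀ J ⊆ I, projSet I (region p J) =
      {y : {i // i ∈ I} → ℝ | (∀ i, y i ∈ Set.Icc (0 : ℝ) 1) ∧
        ∀ K ⊆ I,
          ∑ j ∈ Finset.univ.filter (fun j : {i // i ∈ I} => j.1 ∈ K), y j - p K ≤
            ∑ j ∈ Finset.univ.filter (fun j : {i // i ∈ I} => j.1 ∈ J), y j - p J} := by
  intro J hJ
  have hmono : ∀ K, p (K ∩ I) ≤ p K := fun K =>
    have ⟨_, hz⟩ := nonempty_of_measure_ne_zero (hvol (K ∩ I) inter_subset_right).ne'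
    price_le_of_mem_region hz inter_subset_left
  refine (projSet_region_subset p hJ).antisymm fun y ⟨hy01, hyle⟩ => ?_
  exact ⟨zeroExtend I y, zeroExtend_mem_region hmono hy01 hyle,
    funext (zeroExtend_val I y)⟩

/-- if all sub-bundle regions `D_J`, `J ⊆ I`, have positive volume, then for
every `J ⊆ I` the projection `π_I(D_J)` is cut out inside `[0,1]^I` by the inequalities
involving only bundles `K ⊆ I`. -/
theorem projection_shape (n : ℕ) (hn : 1 ≤ n) (p : Finset (Fin n) → ℝ) (hp0 : p ∅ = 0)
    (I : Finset (Fin n)) (hvol : ∀ J ⊆ I, 0 < volume (region p J)) :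
    ∀ J ⊆ I, projSet I (region p J) =
      {y : {i // i ∈ I} → ℝ | (∀ i, y i ∈ Set.Icc (0 : ℝ) 1) ∧
        ∀ K ⊆ I,
          ∑ j ∈ Finset.univ.filter (fun j : {i // i ∈ I} => j.1 ∈ K), y j - p K ≤
            ∑ j ∈ Finset.univ.filter (fun j : {i // i ∈ I} => j.1 ∈ J), y j - p J} :=
  projection_shape_general n p I hvol
end

section
/- Let n ≥ 1 and let p be a submodular price schedule for n items. Then for every I ⊆ [n], identifying ℝⁿ with ℝ^I × ℝ^{I^c} where I^c = [n]∖I, the region D_I factors as the product D_I = π_I(D_I) × π_{I^c}(D_I). Moreover, for every i ∈ I, the i-th upper boundary D_I^i = {x_{−i} : (1, x_{−i}) ∈ D_I} (where x_{−i} denotes the vector of all coordinates except the i-th, and (1, x_{−i}) the point with i-th coordinate 1 and the other coordinates given by x_{−i}) factors as D_I^i = π_{I∖{i}}(π_I(D_I)) × π_{I^c}(D_I). -/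
open Finset MeasureTheory

/-! By submodularity, the constraint of `D_I` for a set `J` follows from those for `I ∩ J` and
`I ∪ J`. The constraints for `J ⊆ I` read `p I - p J ≤ ∑_{I \ J} x`, so they only involve the
coordinates in `I` and get easier as these grow; those for `I ⊆ J` read
`∑_{J \ I} x ≤ p J - p I`, so they only involve the coordinates outside `I`. Hence the two halves
of points of `D_I` can be glued, and the coordinates in `I` can be raised up to `1`. -/

lemma mem_region_of_mem_Icc_of_eq {n : ℕ} {p : Finset (Fin n) → ℝ}
    (hsub : ∀ I J : Finset (Fin n), p (I ∪ J) + p (I ∩ J) ≤ p I + p J)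
    {I : Finset (Fin n)} {w z x : Fin n → ℝ} (hw : w ∈ region p I) (hz : z ∈ region p I)
    (hwx : ∀ i ∈ I, x i ∈ Set.Icc (w i) 1) (hzx : ∀ i ∉ I, x i = z i) :
    x ∈ region p I := by
  refine ⟨fun i => ?_, fun J => ?_⟩
  · by_cases hi : i ∈ I
    · exact ⟨(hw.1 i).1.trans (hwx i hi).1, (hwx i hi).2⟩
    · rw [hzx i hi]
      exact hz.1 i
  have hlow : p I - p (I ∩ J) ≤ ∑ j ∈ I \ J, x j := by
    have hwJ := hw.2 (I ∩ J)
    have hsplit := sum_inter_add_sum_sdiff I J w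
    have hle : ∑ j ∈ I \ J, w j ≤ ∑ j ∈ I \ J, x j :=
      sum_le_sum fun j hj => (hwx j (mem_sdiff.1 hj).1).1
    linarith
  have hup : ∑ j ∈ J \ I, x j ≤ p (I ∪ J) - p I := by
    have hzJ := hz.2 (I ∪ J)
    have hunion := sum_union_inter (s₁ := I) (s₂ := J) (f := z)
    have hsplit := sum_inter_add_sum_sdiff J I z
    have heq : ∑ j ∈ J \ I, x j = ∑ j ∈ J \ I, z j :=
      sum_congr rfl fun j hj => hzx j (mem_sdiff.1 hj).2
    rw [inter_comm] at hsplit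
    linarith
  have hJ := sum_inter_add_sum_sdiff J I x
  have hI := sum_inter_add_sum_sdiff I J x
  rw [inter_comm] at hJ
  linarith [hsub I J]

lemma restrict_mem_projSet_iff {n : ℕ} {K : Finset (Fin n)} {S : Set (Fin n → ℝ)}
    {x : Fin n → ℝ} :
    (fun j : {j // j ∈ K} => x j) ∈ projSet K S ↔ ∃ w ∈ S, ∀ j ∈ K, w j = x j := by
  simp only [projSet, Set.mem_image, funext_iff, Subtype.forall]

lemma mem_region_iff_restrict_mem_projSet {n : ℕ} {p : Finset (Fin n) → ℝ}
    (hsub : ∀ I J : Finset (Fin n), p (I ∪ J) + p (I ∩ J) ≤ p I + p J)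
    {I K : Finset (Fin n)} {x : Fin n → ℝ} (hx : ∀ i ∈ I \ K, x i = 1) :
    x ∈ region p I ↔ (fun j : {j // j ∈ K} => x j) ∈ projSet K (region p I) ∧
      (fun j : {j // j ∈ Iᶜ} => x j) ∈ projSet Iᶜ (region p I) := by
  simp only [restrict_mem_projSet_iff]
  refine ⟨fun h => ⟨⟨x, h, fun _ _ => rfl⟩, ⟨x, h, fun _ _ => rfl⟩⟩, ?_⟩
  rintro ⟨⟨w, hw, hwx⟩, ⟨z, hz, hzx⟩⟩
  refine mem_region_of_mem_Icc_of_eq hsub hw hz (fun i hi => ?_)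
    (fun i hi => (hzx i (mem_compl.2 hi)).symm)
  by_cases hiK : i ∈ K
  · rw [← hwx i hiK]
    exact ⟨le_rfl, (hw.1 i).2⟩
  · rw [hx i (mem_sdiff.2 ⟨hi, hiK⟩)]
    exact ⟨(hw.1 i).2, le_rfl⟩

/-- for a submodular price schedule, the region `D_I` factors as the product
`π_I(D_I) × π_{I^c}(D_I)` (expressed pointwise under the identification
`ℝⁿ ≅ ℝ^I × ℝ^{I^c}`), and the `i`-th upper boundary
`D_I^i = {x_{−i} : (1, x_{−i}) ∈ D_I}` factors as
`π_{I∖{i}}(π_I(D_I)) × π_{I^c}(D_I)`. -/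
theorem region_product_factorization (n : ℕ) (p : Finset (Fin n) → ℝ)
    (hsub : ∀ I J : Finset (Fin n), p (I ∪ J) + p (I ∩ J) ≤ p I + p J)
    (I : Finset (Fin n)) :
    (∀ x : Fin n → ℝ, x ∈ region p I ↔
      ((fun i : {i // i ∈ I} => x i.1) ∈ projSet I (region p I) ∧
        (fun i : {i // i ∈ Iᶜ} => x i.1) ∈ projSet Iᶜ (region p I))) ∧
    (∀ i : Fin n, ∀ hi : i ∈ I, ∀ y : {j : Fin n // j ≠ i} → ℝ,
      ((fun j : Fin n => if h : j = i then (1 : ℝ) else y ⟨j, h⟩) ∈ region p I ↔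
        ((fun j : {j // j ∈ I.erase i} => y ⟨j.1, Finset.ne_of_mem_erase j.2⟩) ∈
            projSet (I.erase i) (region p I) ∧
          (fun j : {j // j ∈ Iᶜ} =>
              y ⟨j.1, by
                intro hji
                exact Finset.mem_compl.mp j.2 (by rw [hji]; exact hi)⟩) ∈
            projSet Iᶜ (region p I)))) := by
  refine ⟨fun x => mem_region_iff_restrict_mem_projSet hsub (by simp), fun i hi y => ?_⟩
  convert mem_region_iff_restrict_mem_projSet (I := I) (K := I.erase i) hsub
    (x := fun j => if h : j = i then (1 : ℝ) else y ⟨j, h⟩) (by simp [sdiff_erase_self hi]) using 4 <;>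
    rw [dif_neg]
end
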